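/- arXiv:2411.06152 — 4 statements merged into one kernel-verified Lean document; each statement's English description precedes it below -/
import Mathlib

section
/- Conversely, for a perfect isolated discontinuity in cell i with the explicit Euler update, if 0 < c < 1, φ_{i−1/2}^n = φ̄_{i−1}^n, φ_{i+3/2}^n = φ̄_{i+1}^n, and the reconstructed value satisfies both φ̃_{i+1/2} ≤ (1/c)·φ̃_i and φ̃_i ≤ φ̃_{i+1/2} ≤ 1, then the updated solution satisfies φ̄_{i−1}^{n+1} ≤ φ̄_i^{n+1} ≤ φ̄_{i+1}^{n+1} ≤ φ̄_{i+1}^n, i.e., the discontinuity is convected without overshoot or undershoot in cells i and i+1. -/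
/-- Converse direction: if the normalized reconstructed value satisfies
φ̃_{i+1/2} ≤ (1/c)·φ̃_i and φ̃_i ≤ φ̃_{i+1/2} ≤ 1, then the explicit Euler update convects
the perfect isolated discontinuity without overshoot or undershoot in cells i and i+1. -/
theorem stmt2
    (c : ℝ) (hc0 : 0 < c) (hc1 : c < 1)
    (i : ℤ) (phib f : ℤ → ℝ)
    (phib' : ℤ → ℝ)
    (hupd : ∀ j, phib' j = phib j - c * (f j - f (j - 1)))
    (hleft : ∀ j ≤ i - 1, phib j = phib (i - 1))
    (hright : ∀ j ≥ i + 1, phib j = phib (i + 1))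
    (hdisc1 : phib (i - 1) ≤ phib i) (hdisc2 : phib i < phib (i + 1))
    -- the interface values in the constant states are the (upwind) constant states:
    (hfl : ∀ j ≤ i - 1, f j = phib (i - 1))
    (hf32 : f (i + 1) = phib (i + 1))
    -- the convection boundedness conditions on the normalized reconstructed value:
    (h1 : (f i - phib (i - 1)) / (phib (i + 1) - phib (i - 1)) ≤
            (1 / c) * ((phib i - phib (i - 1)) / (phib (i + 1) - phib (i - 1))))
    (h2 : (phib i - phib (i - 1)) / (phib (i + 1) - phib (i - 1)) ≤
            (f i - phib (i - 1)) / (phib (i + 1) - phib (i - 1)))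
    (h3 : (f i - phib (i - 1)) / (phib (i + 1) - phib (i - 1)) ≤ 1) :
    phib' (i - 1) ≤ phib' i ∧ phib' i ≤ phib' (i + 1) ∧ phib' (i + 1) ≤ phib (i + 1) := by
  have hD : (0:ℝ) < phib (i + 1) - phib (i - 1) := by linarith
  have hf1 : f (i - 1) = phib (i - 1) := hfl _ le_rfl
  have hf2 : f (i - 1 - 1) = phib (i - 1) := hfl _ (by omega)
  -- clear denominators
  have H1 : c * (f i - phib (i - 1)) ≤ phib i - phib (i - 1) := by
    have h1' : f i - phib (i - 1) ≤ (1 / c) * (phib i - phib (i - 1)) := by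
      have : (f i - phib (i - 1)) / (phib (i + 1) - phib (i - 1)) ≤
          ((1 / c) * (phib i - phib (i - 1))) / (phib (i + 1) - phib (i - 1)) := by
        rw [mul_div_assoc]; exact h1
      exact (div_le_div_iff_of_pos_right hD).1 this
    rw [one_div, inv_mul_eq_div, le_div_iff₀ hc0] at h1'
    nlinarith
  have H2 : phib i ≤ f i := by
    have := (div_le_div_iff_of_pos_right hD).1 h2
    nlinarith
  have H3 : f i ≤ phib (i + 1) := by
    have := (div_le_one hD).1 h3
    linarith
  have e1 : phib' (i - 1) = phib (i - 1) := by rw [hupd, hf1, hf2]; ring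
  have e2 : phib' i = phib i - c * (f i - phib (i - 1)) := by rw [hupd, hf1]
  have e3 : phib' (i + 1) = phib (i + 1) - c * (phib (i + 1) - f i) := by
    rw [hupd, hf32]; simp
  refine ⟨?_, ?_, ?_⟩
  · rw [e1, e2]; linarith
  · rw [e2, e3]; nlinarith
  · rw [e3]; nlinarith
end

section
/- For β > 0 and c ∈ (0,1), the THINC scheme satisfies the convection boundedness condition T_β(x) ≤ x/c for all x ∈ (0,1) if and only if c ≤ sinh β/(β e^β). -/
/-!
Writing `T_β(x) = e^β (1 - e^{-2βx}) / (2 sinh β)`, the bound `1 - e^{-t} ≤ t` puts `T_β` below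
its tangent line `x ↦ T_β'(0) x` at the origin, where `T_β'(0) = β e^β / sinh β`. Conversely,
since `T_β(0) = 0`, a bound `T_β(x) ≤ x / c` for small `x > 0` forces `T_β'(0) ≤ 1 / c`.
-/

/-- THINC normalized reconstruction function. -/
noncomputable def thinc (β x : ℝ) : ℝ :=
  (Real.sinh β + Real.cosh β - Real.exp (β * (1 - 2 * x))) / (2 * Real.sinh β)

open Filter Real Set Topology

theorem HasDerivWithinAt.le_of_eventually_sub_le_mul {f : ℝ → ℝ} {f' k a : ℝ}
    (hf : HasDerivWithinAt f f' (Ioi a) a)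
    (hle : ∀ᶠ x in 𝓝[>] a, f x - f a ≤ k * (x - a)) : f' ≤ k := by
  have hslope : Tendsto (slope f a) (𝓝[>] a) (𝓝 f') :=
    (hasDerivWithinAt_iff_tendsto_slope' (lt_irrefl a)).1 hf
  refine le_of_tendsto hslope ?_
  filter_upwards [hle, self_mem_nhdsWithin] with x hx (hax : a < x)
  rwa [slope_def_field, div_le_iff₀ (sub_pos.2 hax)]

lemma thinc_zero (β : ℝ) : thinc β 0 = 0 := by
  simp [thinc, sinh_add_cosh]

lemma hasDerivAt_thinc (β x : ℝ) :
    HasDerivAt (thinc β) (β * exp (β * (1 - 2 * x)) / sinh β) x := by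
  have hinner : HasDerivAt (fun y => β * (1 - 2 * y)) (-(β * 2)) x := by
    simpa using (((hasDerivAt_id x).const_mul 2).const_sub 1).const_mul β
  refine ((hinner.exp.const_sub (sinh β + cosh β)).div_const (2 * sinh β)).congr_deriv ?_
  ring

lemma thinc_eq (β x : ℝ) :
    thinc β x = exp β * (1 - exp (-(2 * β * x))) / (2 * sinh β) := by
  have hsplit : exp (β * (1 - 2 * x)) = exp β * exp (-(2 * β * x)) := by
    rw [← exp_add]
    ring_nf
  rw [thinc, sinh_add_cosh, hsplit]
  ring

lemma thinc_le_mul {β : ℝ} (hβ : 0 < β) (x : ℝ) :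
    thinc β x ≤ β * exp β / sinh β * x := by
  have hS : 0 < sinh β := sinh_pos_iff.2 hβ
  have hexp : 1 - exp (-(2 * β * x)) ≤ 2 * β * x := by
    linarith [add_one_le_exp (-(2 * β * x))]
  calc thinc β x = exp β * (1 - exp (-(2 * β * x))) / (2 * sinh β) := thinc_eq β x
    _ ≤ exp β * (2 * β * x) / (2 * sinh β) := by gcongr
    _ = β * exp β / sinh β * x := by field_simp

/-- For β > 0 and c ∈ (0,1), T_β(x) ≤ x/c for all x ∈ (0,1)
iff c ≤ sinh β/(β e^β). -/
theorem stmt7 (β c : ℝ) (hβ : 0 < β) (hc : c ∈ Set.Ioo (0 : ℝ) 1) :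
    (∀ x ∈ Set.Ioo (0 : ℝ) 1, thinc β x ≤ x / c) ↔
      c ≤ Real.sinh β / (β * Real.exp β) := by
  have hc0 : 0 < c := hc.1
  have hslope : 0 < β * exp β / sinh β := by
    have := sinh_pos_iff.2 hβ
    positivity
  rw [← one_div_div, le_one_div hc0 hslope]
  constructor
  · intro h
    have hderiv := hasDerivAt_thinc β 0
    simp only [mul_zero, sub_zero, mul_one] at hderiv
    refine hderiv.hasDerivWithinAt.le_of_eventually_sub_le_mul ?_
    filter_upwards [Ioo_mem_nhdsGT one_pos] with x hx
    simpa [thinc_zero, div_eq_inv_mul] using h x hx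
  · intro hk x hx
    calc thinc β x ≤ β * exp β / sinh β * x := thinc_le_mul hβ x
      _ ≤ 1 / c * x := by gcongr; exact hx.1.le
      _ = x / c := by ring
end

section
/- For β = 2, the maximal CFL number for which the THINC scheme satisfies T_β(x) ≤ x/c on (0,1) is sinh 2/(2 e²) = (1 − e^{−4})/4, which lies strictly between 0.24 and 0.25; in particular c = 0.3 violates the bound. -/
lemma thinc_two (x : ℝ) :
    thinc 2 x = Real.exp 2 * (1 - Real.exp (-(4 * x))) / (2 * Real.sinh 2) := by
  unfold thinc
  rw [Real.sinh_add_cosh, show (2:ℝ) * (1 - 2 * x) = 2 + -(4 * x) by ring, Real.exp_add]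
  ring

set_option maxHeartbeats 1600000 in
/-- For β = 2, the maximal CFL number for convection boundedness is
sinh 2/(2e²) = (1 − e⁻⁴)/4 ∈ (0.24, 0.25); in particular c = 0.3 violates the bound. -/
theorem stmt8 :
    (∀ c ∈ Set.Ioo (0 : ℝ) 1,
      (∀ x ∈ Set.Ioo (0 : ℝ) 1, thinc 2 x ≤ x / c) ↔ c ≤ Real.sinh 2 / (2 * Real.exp 2)) ∧
    Real.sinh 2 / (2 * Real.exp 2) = (1 - Real.exp (-4)) / 4 ∧
    (0.24 : ℝ) < (1 - Real.exp (-4)) / 4 ∧ (1 - Real.exp (-4)) / 4 < 0.25 ∧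
    Real.sinh 2 / (2 * Real.exp 2) < 0.3 := by
  have hE : (0:ℝ) < Real.exp 2 := Real.exp_pos 2
  have hm : (0:ℝ) < Real.exp (-2) := Real.exp_pos _
  have hEm : Real.exp (-2) * Real.exp 2 = 1 := by
    rw [← Real.exp_add]; norm_num
  have h4 : Real.exp (-4) = Real.exp (-2) * Real.exp (-2) := by
    rw [← Real.exp_add]; norm_num
  have hs : 2 * Real.sinh 2 = Real.exp 2 - Real.exp (-2) := by
    rw [Real.sinh_eq]; ring
  have hspos : (0:ℝ) < Real.sinh 2 := Real.sinh_pos_iff.mpr (by norm_num)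
  set A : ℝ := 1 - Real.exp (-4) with hA
  have hsA : 2 * Real.sinh 2 = Real.exp 2 * A := by
    rw [hs, hA, h4]; nlinarith [hEm]
  have hE5 : (5:ℝ) < Real.exp 2 := by
    have h1 := Real.exp_one_gt_d9
    have : Real.exp 2 = Real.exp 1 * Real.exp 1 := by
      rw [← Real.exp_add]; norm_num
    nlinarith
  have hm5 : Real.exp (-2) < 1/5 := by nlinarith [hEm]
  have hA1 : Real.exp (-4) < 1/25 := by rw [h4]; nlinarith
  have hApos : (0:ℝ) < A := by simp only [hA]; nlinarith
  have heq : Real.sinh 2 / (2 * Real.exp 2) = A / 4 := by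
    rw [eq_div_iff (by norm_num : (4:ℝ) ≠ 0), div_mul_eq_mul_div,
      div_eq_iff (by positivity : (2:ℝ) * Real.exp 2 ≠ 0)]
    nlinarith [hsA]
  refine ⟨?_, heq ▸ rfl, by nlinarith [Real.exp_pos (-4)], by nlinarith [Real.exp_pos (-4)], ?_⟩
  · intro c hc
    obtain ⟨hc0, hc1⟩ := hc
    constructor
    · -- forward: bound implies c ≤ K
      intro h
      by_contra hK
      push_neg at hK
      rw [heq] at hK
      have hAc : A < 4 * c := by linarith
      set x0 : ℝ := (4 * c - A) / (8 * A) with hx0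
      have hx0pos : 0 < x0 := div_pos (by linarith) (by positivity)
      have hx0lt1 : x0 < 1 := by
        rw [hx0, div_lt_one (by positivity)]
        nlinarith [hA1]
      have h8 : 8 * A * x0 = 4 * c - A := by
        rw [hx0]; field_simp
      have hle := h x0 ⟨hx0pos, hx0lt1⟩
      rw [thinc_two, hsA, div_le_div_iff₀ (by positivity) hc0] at hle
      set em : ℝ := Real.exp (-(4 * x0)) with hemdef
      have hempos : 0 < em := Real.exp_pos _
      have hprod : em * Real.exp (4 * x0) = 1 := by
        rw [hemdef, ← Real.exp_add]; norm_num
      have hgt : 1 + 4 * x0 < Real.exp (4 * x0) := by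
        have := Real.add_one_lt_exp (show (4:ℝ) * x0 ≠ 0 from ne_of_gt (by positivity))
        linarith
      have hem1 : em * (1 + 4 * x0) < 1 := by
        calc em * (1 + 4 * x0) < em * Real.exp (4 * x0) :=
              mul_lt_mul_of_pos_left hgt hempos
          _ = 1 := hprod
      have h5 : 4 * x0 < (1 - em) * (1 + 4 * x0) := by nlinarith
      -- hle : exp 2 * (1 - em) * c ≤ x0 * (exp 2 * A)
      have hAx : A * (1 + 4 * x0) < 4 * c := by nlinarith
      have q1 : Real.exp 2 * (1 - em) * c * (1 + 4 * x0) ≤ x0 * (Real.exp 2 * A) * (1 + 4 * x0) :=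
        mul_le_mul_of_nonneg_right hle (by positivity)
      have q2 : Real.exp 2 * c * (4 * x0) < Real.exp 2 * c * ((1 - em) * (1 + 4 * x0)) :=
        mul_lt_mul_of_pos_left h5 (by positivity)
      have q3 : Real.exp 2 * x0 * (A * (1 + 4 * x0)) < Real.exp 2 * x0 * (4 * c) :=
        mul_lt_mul_of_pos_left hAx (by positivity)
      nlinarith [q1, q2, q3]
    · -- backward
      intro h x hx
      obtain ⟨hx0, hx1⟩ := hx
      rw [heq] at h
      have h1 : 1 - Real.exp (-(4 * x)) ≤ 4 * x := by
        have := Real.add_one_le_exp (-(4 * x)); linarith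
      rw [thinc_two, hsA, div_le_div_iff₀ (by positivity) hc0]
      have hem : 0 < Real.exp (-(4*x)) := Real.exp_pos _
      have k1 : Real.exp 2 * c * (1 - Real.exp (-(4*x))) ≤ Real.exp 2 * c * (4*x) :=
        mul_le_mul_of_nonneg_left h1 (by positivity)
      have k2 : 4 * c ≤ A := by linarith
      have k3 : Real.exp 2 * x * (4*c) ≤ Real.exp 2 * x * A :=
        mul_le_mul_of_nonneg_left k2 (by positivity)
      nlinarith [k1, k3]
  · rw [heq]; nlinarith [Real.exp_pos (-4)]
end

section
/- With the same fifth-order WENO-type combination on normalized discontinuity data, if ω₂ = 1 (i.e., ω₀ = ω₁ = 0, the pure downwind-biased smooth stencil is selected, as TENO does when cutting off the other stencils), then φ̃_{i+1/2}(x) = x/3 + 2/3, which satisfies φ̃_{i+1/2}(x) ≤ 1 for all x ∈ [0,1] but violates φ̃_{i+1/2} ≤ x/c for all c > 0 when x is sufficiently small; specifically, for any c ∈ (0,1) there exists x ∈ (0,1) with x/3 + 2/3 > x/c. -/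
/-- With ω₂ = 1 (pure downwind-biased stencil, as TENO selects),
φ̃_{i+1/2}(x) = x/3 + 2/3 on normalized discontinuity data; this satisfies
φ̃ ≤ 1 on [0,1] but for any c ∈ (0,1) there is x ∈ (0,1) with x/3 + 2/3 > x/c. -/
theorem stmt16 :
    (∀ x : ℝ, (1/3 : ℝ) * x + (5/6) * 1 - (1/6) * 1 = x / 3 + 2 / 3) ∧
    (∀ x ∈ Set.Icc (0 : ℝ) 1, x / 3 + 2 / 3 ≤ 1) ∧
    (∀ c ∈ Set.Ioo (0 : ℝ) 1, ∃ x ∈ Set.Ioo (0 : ℝ) 1, x / c < x / 3 + 2 / 3) := by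
  refine ⟨fun x => by ring, fun x hx => by nlinarith [hx.1, hx.2], fun c hc => ?_⟩
  refine ⟨c/2, ⟨by linarith [hc.1], by linarith [hc.2]⟩, ?_⟩
  have hc0 : c ≠ 0 := ne_of_gt hc.1
  rw [div_div, mul_comm, ← div_div, div_self hc0]
  nlinarith [hc.1, hc.2]
end
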